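/- arXiv:2312.08772 — 4 statements merged into one kernel-verified Lean document; each statement's English description precedes it below -/
import Mathlib

section
/- If G is a connected graph and S is a resolving set of G, then the vertex coloring that assigns each vertex of S its own unique color and all vertices outside S a single common extra color is a distinguishing coloring of G (no nontrivial automorphism of G preserves it). -/
/-- `S` is a resolving set of `G`: any two distinct vertices differ in distance
to some vertex of `S`. -/
def IsResolving {V : Type*} (G : SimpleGraph V) (S : Set V) : Prop :=
  ∀ u v : V, u ≠ v → ∃ s ∈ S, G.dist u s ≠ G.dist v s

/-- The metric dimension of `G`: minimum size of a resolving set. -/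
noncomputable def metricDim {V : Type*} (G : SimpleGraph V) : ℕ :=
  sInf {n | ∃ S : Finset V, S.card = n ∧ IsResolving G ↑S}

/-- A coloring `c` is distinguishing: the only color-preserving automorphism is the identity. -/
def IsDistinguishing {V C : Type*} (G : SimpleGraph V) (c : V → C) : Prop :=
  ∀ f : G ≃g G, (∀ v, c (f v) = c v) → ∀ v, f v = v

/-- The distinguishing number of `G`: minimum number of colors in a distinguishing coloring. -/
noncomputable def distinguishingNumber {V : Type*} (G : SimpleGraph V) : ℕ :=
  sInf {n | ∃ c : V → Fin n, IsDistinguishing G c}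

/-- The join of two graphs: disjoint union plus all cross edges. -/
def graphJoin {α β : Type*} (G : SimpleGraph α) (H : SimpleGraph β) :
    SimpleGraph (α ⊕ β) := (Gᶜ ⊕g Hᶜ)ᶜ

private lemma iso_dist_le {V : Type*} {G : SimpleGraph V} (f : G ≃g G) (u v : V) :
    G.dist (f u) (f v) ≤ G.dist u v := by
  by_cases h : G.Reachable u v
  · obtain ⟨p, hp⟩ := h.exists_walk_length_eq_dist
    calc G.dist (f u) (f v) ≤ (p.map f.toHom).length := SimpleGraph.dist_le _
    _ = p.length := p.length_map _
    _ = G.dist u v := hp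
  · rw [SimpleGraph.dist_eq_zero_of_not_reachable h]
    rw [SimpleGraph.dist_eq_zero_of_not_reachable]
    intro hr
    exact h ⟨(hr.some.map f.symm.toHom).copy (f.symm_apply_apply u) (f.symm_apply_apply v)⟩

private lemma iso_dist_eq {V : Type*} {G : SimpleGraph V} (f : G ≃g G) (u v : V) :
    G.dist (f u) (f v) = G.dist u v := by
  refine le_antisymm (iso_dist_le f u v) ?_
  have := iso_dist_le f.symm (f u) (f v)
  simpa using this

theorem stmt0 {V : Type*} (G : SimpleGraph V) (hG : G.Connected)
    (S : Set V) [DecidablePred (· ∈ S)] (hS : IsResolving G S) :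
    IsDistinguishing G (fun v => if v ∈ S then (some v : Option V) else none) := by
  intro f hf v
  have hfix : ∀ s ∈ S, f s = s := by
    intro s hs
    have := hf s
    simp only [if_pos hs] at this
    by_cases h : f s ∈ S
    · simpa [if_pos h] using this
    · simp [if_neg h] at this
  by_contra hne
  obtain ⟨s, hs, hd⟩ := hS (f v) v hne
  apply hd
  have := iso_dist_eq f v s
  rwa [hfix s hs] at this
end

section
/- For any connected graph G on n vertices, D(G) ≤ n − diam(G) + 1, where diam(G) is the diameter of G. -/
/-- Distance from the start of a walk to its `i`-th vertex is at most `i`. -/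
lemma aux_dist_getVert_le {V : Type*} {G : SimpleGraph V} (hG : G.Connected) {u v : V}
    (p : G.Walk u v) (i : ℕ) : G.dist u (p.getVert i) ≤ i := by
  induction p generalizing i with
  | nil =>
    rw [SimpleGraph.Walk.getVert_of_length_le _ (Nat.zero_le i), SimpleGraph.dist_self]
    exact Nat.zero_le i
  | @cons a b c h q ih =>
    cases i with
    | zero => simp
    | succ n =>
      rw [SimpleGraph.Walk.getVert_cons_succ]
      calc G.dist a (q.getVert n) ≤ G.dist a b + G.dist b (q.getVert n) :=
            hG.dist_triangle
        _ ≤ 1 + n := by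
            have h1 : G.dist a b ≤ 1 := by
              simpa using SimpleGraph.dist_le (SimpleGraph.Walk.cons h SimpleGraph.Walk.nil)
            exact Nat.add_le_add h1 (ih n)
        _ = n + 1 := Nat.add_comm 1 n

/-- On a shortest walk, the distance from the start to the `i`-th vertex is exactly `i`. -/
lemma aux_dist_getVert {V : Type*} {G : SimpleGraph V} (hG : G.Connected) {u v : V}
    (p : G.Walk u v) (hp : p.length = G.dist u v) {i : ℕ} (hi : i ≤ p.length) :
    G.dist u (p.getVert i) = i := by
  refine le_antisymm (aux_dist_getVert_le hG p i) ?_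
  have h2 : G.dist (p.getVert i) v ≤ p.length - i := by
    have := aux_dist_getVert_le hG p.reverse (p.length - i)
    rwa [SimpleGraph.Walk.getVert_reverse, Nat.sub_sub_self hi, SimpleGraph.dist_comm] at this
  have h3 : G.dist u v ≤ G.dist u (p.getVert i) + G.dist (p.getVert i) v := hG.dist_triangle
  omega

/-- An automorphism preserves distances. -/
lemma aux_iso_dist {V : Type*} {G : SimpleGraph V} (hG : G.Connected) (f : G ≃g G) (a b : V) :
    G.dist (f a) (f b) = G.dist a b := by
  have key : ∀ (g : G ≃g G) (a b : V), G.dist (g a) (g b) ≤ G.dist a b := by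
    intro g a b
    obtain ⟨p, hp⟩ := hG.exists_walk_length_eq_dist a b
    calc G.dist (g a) (g b) ≤ (p.map g.toHom).length := SimpleGraph.dist_le _
      _ = G.dist a b := by rw [SimpleGraph.Walk.length_map, hp]
  refine le_antisymm (key f a b) ?_
  have := key f.symm (f a) (f b)
  simpa using this

/-- A resolving set of size `k` gives a distinguishing coloring with `k + 1` colors. -/
lemma aux_dist_le_resolving {V : Type*} [Fintype V] {G : SimpleGraph V} (hG : G.Connected)
    (S : Finset V) (hS : IsResolving G ↑S) :
    distinguishingNumber G ≤ S.card + 1 := by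
  apply Nat.sInf_le
  classical
  refine ⟨fun v => if h : v ∈ S then (S.equivFin ⟨v, h⟩).castSucc else Fin.last S.card, ?_⟩
  intro f hf
  have hfix : ∀ s ∈ S, f s = s := by
    intro s hs
    have := hf s
    by_cases hfs : f s ∈ S
    · simp only [dif_pos hs, dif_pos hfs] at this
      have := Fin.castSucc_injective _ this
      have := S.equivFin.injective this
      exact congrArg Subtype.val this
    · simp only [dif_pos hs, dif_neg hfs] at this
      exact absurd this.symm (Fin.castSucc_lt_last _).ne
  intro v
  by_contra hv
  obtain ⟨s, hs, hd⟩ := hS (f v) v hv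
  apply hd
  have : f s = s := hfix s hs
  calc G.dist (f v) s = G.dist (f v) (f s) := by rw [this]
    _ = G.dist v s := aux_iso_dist hG f v s

theorem stmt4 {V : Type*} [Fintype V] (G : SimpleGraph V) (hG : G.Connected) :
    distinguishingNumber G ≤ Fintype.card V - G.diam + 1 := by
  classical
  haveI : Nonempty V := hG.nonempty
  obtain ⟨u, v, huv⟩ := G.exists_dist_eq_diam
  obtain ⟨p, hp⟩ := hG.exists_walk_length_eq_dist u v
  have hlen : p.length = G.diam := by rw [hp, huv]
  set T : Finset V := (Finset.Icc 1 p.length).image p.getVert with hT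
  have hdg : ∀ i ≤ p.length, G.dist u (p.getVert i) = i := fun i hi =>
    aux_dist_getVert hG p hp hi
  have hTcard : T.card = p.length := by
    rw [hT, Finset.card_image_of_injOn, Nat.card_Icc]
    · omega
    · intro i hi j hj hij
      simp only [Finset.coe_Icc, Set.mem_Icc] at hi hj
      have := hdg i hi.2
      have := hdg j hj.2
      rw [hij] at *
      omega
  have huT : u ∉ T := by
    intro hu
    rw [hT] at hu
    obtain ⟨i, hi, hiu⟩ := Finset.mem_image.mp hu
    simp only [Finset.mem_Icc] at hi
    have := hdg i hi.2
    rw [hiu, SimpleGraph.dist_self] at this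
    omega
  have hres : IsResolving G ↑(Tᶜ : Finset V) := by
    intro a b hab
    by_cases ha : a ∈ T
    · by_cases hb : b ∈ T
      · refine ⟨u, by simpa using huT, ?_⟩
        obtain ⟨i, hi, hia⟩ := Finset.mem_image.mp ha
        obtain ⟨j, hj, hjb⟩ := Finset.mem_image.mp hb
        simp only [Finset.mem_Icc] at hi hj
        rw [SimpleGraph.dist_comm, ← hia, hdg i hi.2,
          SimpleGraph.dist_comm (v := u), ← hjb, hdg j hj.2]
        intro hijeq
        exact hab (by rw [← hia, ← hjb, hijeq])
      · refine ⟨b, by simpa using hb, ?_⟩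
        rw [SimpleGraph.dist_self]
        have := hG.pos_dist_of_ne hab
        omega
    · refine ⟨a, by simpa using ha, ?_⟩
      rw [SimpleGraph.dist_self]
      have := hG.pos_dist_of_ne (Ne.symm hab)
      omega
  have := aux_dist_le_resolving hG Tᶜ hres
  rwa [Finset.card_compl, hTcard, hlen] at this
end

section
/- For a connected graph G of order n ≥ 2, the metric dimension satisfies dim(G) ≤ n − diam(G). -/
/-- `S` is a resolving set of `G`: any two distinct vertices differ in distance
to some vertex of `S`. -/
lemma walk_to_getVert {V : Type*} {G : SimpleGraph V} :
    ∀ {u v : V} (p : G.Walk u v) (k : ℕ),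
      ∃ q : G.Walk u (p.getVert k), q.length ≤ k := by
  intro u v p
  induction p with
  | nil => intro k; exact ⟨SimpleGraph.Walk.nil.copy rfl (by simp [SimpleGraph.Walk.getVert]), by simp⟩
  | cons h p ih =>
    intro k
    cases k with
    | zero => exact ⟨SimpleGraph.Walk.nil.copy rfl (by simp), by simp⟩
    | succ k =>
      obtain ⟨q, hq⟩ := ih k
      exact ⟨SimpleGraph.Walk.cons h q, by simpa using Nat.succ_le_succ hq⟩

lemma dist_getVert {V : Type*} {G : SimpleGraph V} {u v : V}
    (p : G.Walk u v) (hp : p.length = G.dist u v) {k : ℕ} (hk : k ≤ p.length) :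
    G.dist u (p.getVert k) = k := by
  obtain ⟨q1, hq1⟩ := walk_to_getVert p k
  obtain ⟨q2', hq2'⟩ := walk_to_getVert p.reverse (p.length - k)
  have hgv : p.reverse.getVert (p.length - k) = p.getVert k := by
    rw [SimpleGraph.Walk.getVert_reverse, Nat.sub_sub_self hk]
  obtain ⟨q2, hq2⟩ : ∃ q2 : G.Walk v (p.getVert k), q2.length ≤ p.length - k :=
    ⟨q2'.copy rfl hgv, by simpa using hq2'⟩
  have h1 : G.dist u (p.getVert k) ≤ k := le_trans (G.dist_le q1) hq1
  obtain ⟨r, hr⟩ := SimpleGraph.Reachable.exists_walk_length_eq_dist (⟨q1⟩ : G.Reachable u (p.getVert k))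
  have htot : p.length ≤ G.dist u (p.getVert k) + (p.length - k) := by
    calc p.length = G.dist u v := hp
    _ ≤ (r.append q2.reverse).length := G.dist_le _
    _ = r.length + q2.length := by simp
    _ ≤ _ := by omega
  omega


theorem stmt5 {V : Type*} [Fintype V] (G : SimpleGraph V) (hG : G.Connected)
    (hn : 2 ≤ Fintype.card V) :
    metricDim G ≤ Fintype.card V - G.diam := by
  classical
  have : Nonempty V := Fintype.card_pos_iff.mp (by omega)
  obtain ⟨u, v, huv⟩ := G.exists_dist_eq_diam
  obtain ⟨p, hp⟩ := (hG u v).exists_walk_length_eq_dist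
  set d := G.diam with hd
  have hpl : p.length = d := by rw [hp, huv]
  have hdist : ∀ k ≤ d, G.dist u (p.getVert k) = k := fun k hk =>
    dist_getVert p hp (by omega)
  set f : Fin d → V := fun k => p.getVert (k + 1) with hf
  have hfinj : Function.Injective f := by
    intro i j hij
    have hi := hdist (i + 1) (by omega)
    have hj := hdist (j + 1) (by omega)
    have : (i : ℕ) + 1 = (j : ℕ) + 1 := by
      rw [← hi, ← hj]; exact congrArg (G.dist u) hij
    exact Fin.ext (by omega)
  set T : Finset V := Finset.image f Finset.univ with hT
  have hTcard : T.card = d := by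
    rw [hT, Finset.card_image_of_injective _ hfinj, Finset.card_univ, Fintype.card_fin]
  have huT : u ∉ T := by
    simp only [hT, Finset.mem_image]
    rintro ⟨k, -, hk⟩
    have := hdist (k + 1) (by omega)
    rw [show p.getVert (↑k + 1) = u from hk] at this
    simp [G.dist_self] at this
  refine Nat.sInf_le ⟨Tᶜ, ?_, ?_⟩
  · rw [Finset.card_compl, hTcard]
  · intro a b hab
    by_cases ha : a ∈ T
    · by_cases hb : b ∈ T
      · obtain ⟨i, -, hi⟩ := Finset.mem_image.mp ha
        obtain ⟨j, -, hj⟩ := Finset.mem_image.mp hb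
        refine ⟨u, by simpa using huT, ?_⟩
        rw [SimpleGraph.dist_comm (u := a), SimpleGraph.dist_comm (u := b), ← hi, ← hj]
        have hdi := hdist (i + 1) (by omega)
        have hdj := hdist (j + 1) (by omega)
        show G.dist u (p.getVert (↑i + 1)) ≠ G.dist u (p.getVert (↑j + 1))
        rw [hdi, hdj]
        intro h
        apply hab
        rw [← hi, ← hj]
        congr 1
        exact Fin.ext (by omega)
      · exact ⟨b, by simpa using hb, by
          rw [G.dist_self]
          exact (Nat.pos_of_ne_zero fun h => hab ((hG.dist_eq_zero_iff).mp h)).ne'⟩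
    · exact ⟨a, by simpa using ha, by
        rw [G.dist_self]
        exact fun h => hab (((hG.dist_eq_zero_iff).mp h.symm).symm)⟩
end

section
/- For the join G = K_s + K̄_t of a complete graph on s vertices with an empty graph on t vertices (s ≥ 1, t ≥ 2), the distinguishing number is D(G) = max{s, t}. -/
namespace Stmt14Aux

abbrev Gr (s t : ℕ) : SimpleGraph (Fin s ⊕ Fin t) :=
  graphJoin (⊤ : SimpleGraph (Fin s)) (⊥ : SimpleGraph (Fin t))

lemma gr_adj_ll {s t : ℕ} (a b : Fin s) :
    (Gr s t).Adj (.inl a) (.inl b) ↔ a ≠ b := by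
  simp [Gr, graphJoin, SimpleGraph.sum]

lemma gr_adj_lr {s t : ℕ} (a : Fin s) (c : Fin t) :
    (Gr s t).Adj (.inl a) (.inr c) := by
  simp [Gr, graphJoin, SimpleGraph.sum]

lemma gr_not_adj_rr {s t : ℕ} (c d : Fin t) :
    ¬ (Gr s t).Adj (.inr c) (.inr d) := by
  simp [Gr, graphJoin, SimpleGraph.sum]

/-- Any pair of permutations of the parts induces an automorphism. -/
def grIso {s t : ℕ} (σ : Fin s ≃ Fin s) (τ : Fin t ≃ Fin t) : Gr s t ≃g Gr s t :=
  ⟨Equiv.sumCongr σ τ, by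
    intro u v
    cases u <;> cases v <;>
      simp [Gr, graphJoin, SimpleGraph.sum, ne_eq, EmbeddingLike.apply_eq_iff_eq]⟩

lemma part_left {s t : ℕ} (ht : 2 ≤ t) (f : Gr s t ≃g Gr s t) (a : Fin s) :
    ∃ a', f (.inl a) = .inl a' := by
  cases h : f (.inl a) with
  | inl a' => exact ⟨a', rfl⟩
  | inr c =>
    haveI : Nontrivial (Fin t) := Fin.nontrivial_iff_two_le.mpr ht
    obtain ⟨c', hc'⟩ := exists_ne c
    have hne : f.symm (.inr c') ≠ Sum.inl a := by
      intro he
      have : (Sum.inr c' : Fin s ⊕ Fin t) = f (.inl a) := by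
        rw [← he]; simp
      rw [h] at this
      exact hc' (Sum.inr.inj this)
    have hadj : (Gr s t).Adj (.inl a) (f.symm (.inr c')) := by
      cases hw : f.symm (.inr c') with
      | inl b =>
        rw [gr_adj_ll]
        intro hab; apply hne; rw [hw, hab]
      | inr d => exact gr_adj_lr a d
    have := f.map_adj_iff.mpr hadj
    rw [h, f.apply_symm_apply] at this
    exact (gr_not_adj_rr c c' this).elim

lemma part_right {s t : ℕ} (ht : 2 ≤ t) (f : Gr s t ≃g Gr s t) (c : Fin t) :
    ∃ c', f (.inr c) = .inr c' := by
  cases h : f (.inr c) with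
  | inl a =>
    obtain ⟨a', ha'⟩ := part_left ht f.symm a
    have : f.symm (.inl a) = .inr c := by rw [← h]; simp
    rw [this] at ha'
    exact absurd ha' (by simp)
  | inr c' => exact ⟨c', rfl⟩

end Stmt14Aux


open Stmt14Aux in
theorem stmt14 (s t : ℕ) (hs : 1 ≤ s) (ht : 2 ≤ t) :
    distinguishingNumber
      (graphJoin (⊤ : SimpleGraph (Fin s)) (⊥ : SimpleGraph (Fin t))) = max s t := by
  have hmem : max s t ∈ {n | ∃ c : Fin s ⊕ Fin t → Fin n, IsDistinguishing (Gr s t) c} := by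
    refine ⟨Sum.elim (fun a => Fin.castLE (le_max_left s t) a)
      (fun c => Fin.castLE (le_max_right s t) c), ?_⟩
    intro f hf v
    cases v with
    | inl a =>
      obtain ⟨a', ha'⟩ := part_left ht f a
      have := hf (Sum.inl a)
      rw [ha'] at this ⊢
      simp only [Sum.elim_inl, Fin.ext_iff, Fin.coe_castLE] at this
      exact congrArg Sum.inl (Fin.ext this)
    | inr c =>
      obtain ⟨c', hc'⟩ := part_right ht f c
      have := hf (Sum.inr c)
      rw [hc'] at this ⊢
      simp only [Sum.elim_inr, Fin.ext_iff, Fin.coe_castLE] at this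
      exact congrArg Sum.inr (Fin.ext this)
  refine le_antisymm (Nat.sInf_le hmem) (le_csInf ⟨_, hmem⟩ ?_)
  rintro n ⟨c, hc⟩
  rw [max_le_iff]
  constructor
  · by_contra h
    push_neg at h
    have hninj : ¬ Function.Injective (fun a : Fin s => c (.inl a)) := by
      intro hinj
      have := Fintype.card_le_of_injective _ hinj
      simp at this; omega
    rw [Function.not_injective_iff] at hninj
    obtain ⟨a, b, hab, hne⟩ := hninj
    have key := hc (grIso (Equiv.swap a b) (Equiv.refl _)) ?_ (Sum.inl a)
    · simp only [grIso, RelIso.coe_fn_mk, Equiv.sumCongr_apply, Sum.map_inl,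
        Equiv.swap_apply_left] at key
      exact hne (Sum.inl.inj key).symm
    · intro v
      cases v with
      | inl x =>
        simp only [grIso, RelIso.coe_fn_mk, Equiv.sumCongr_apply, Sum.map_inl]
        rcases Equiv.swap_apply_def a b x with _
        by_cases hxa : x = a
        · subst hxa; rw [Equiv.swap_apply_left]; exact hab.symm
        · by_cases hxb : x = b
          · subst hxb; rw [Equiv.swap_apply_right]; exact hab
          · rw [Equiv.swap_apply_of_ne_of_ne hxa hxb]
      | inr x =>
        simp only [grIso, RelIso.coe_fn_mk, Equiv.sumCongr_apply, Sum.map_inr, Equiv.refl_apply]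
  · by_contra h
    push_neg at h
    have hninj : ¬ Function.Injective (fun x : Fin t => c (.inr x)) := by
      intro hinj
      have := Fintype.card_le_of_injective _ hinj
      simp at this; omega
    rw [Function.not_injective_iff] at hninj
    obtain ⟨a, b, hab, hne⟩ := hninj
    have key := hc (grIso (Equiv.refl _) (Equiv.swap a b)) ?_ (Sum.inr a)
    · simp only [grIso, RelIso.coe_fn_mk, Equiv.sumCongr_apply, Sum.map_inr,
        Equiv.swap_apply_left] at key
      exact hne (Sum.inr.inj key).symm
    · intro v
      cases v with
      | inl x =>
        simp only [grIso, RelIso.coe_fn_mk, Equiv.sumCongr_apply, Sum.map_inl, Equiv.refl_apply]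
      | inr x =>
        simp only [grIso, RelIso.coe_fn_mk, Equiv.sumCongr_apply, Sum.map_inr]
        by_cases hxa : x = a
        · subst hxa; rw [Equiv.swap_apply_left]; exact hab.symm
        · by_cases hxb : x = b
          · subst hxb; rw [Equiv.swap_apply_right]; exact hab
          · rw [Equiv.swap_apply_of_ne_of_ne hxa hxb]
end
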